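/- arXiv:2602.04571 — 6 statements merged into one kernel-verified Lean document; each statement's English description precedes it below -/
import Mathlib

section
/- The rational functions f_1 = 1/F_{11}, f_2 = F_{11}/F_{12}, f_{Σ1} = y_1 F_{22}/F_{12}, f_{Σ2} = y_2/F_{22}, f_{12} = F_{12}/(F_{11} F_{22}), where F_{11} = 1 + y_1, F_{22} = 1 + y_2, F_{12} = 1 + y_1 + y_1 y_2, satisfy all five pentagon u-equations: f_{12} + f_1 f_{Σ2} = 1, f_1 + f_{12} f_{Σ1} = 1, f_2 + f_{Σ1} f_{Σ2} = 1, f_{Σ1} + f_1 f_2 = 1, and f_{Σ2} + f_2 f_{12} = 1, where f_2 is corrected to f_2 = F_{11}/F_{12} and the equations are identities in the field ℂ(y_1, y_2). -/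
set_option maxHeartbeats 1000000
set_option synthInstance.maxHeartbeats 400000
open MvPolynomial

lemma pentagon_aux {K : Type*} [Field K] (y1 y2 : K)
    (h11' : (1:K) + y1 ≠ 0) (h22' : (1:K) + y2 ≠ 0) (h12' : (1:K) + y1 + y1 * y2 ≠ 0) :
    ((1 + y1 + y1*y2) / ((1+y1) * (1+y2)) + (1/(1+y1)) * (y2/(1+y2)) = 1 ∧
     1/(1+y1) + ((1+y1+y1*y2)/((1+y1)*(1+y2))) * (y1*(1+y2)/(1+y1+y1*y2)) = 1 ∧
     (1+y1)/(1+y1+y1*y2) + (y1*(1+y2)/(1+y1+y1*y2)) * (y2/(1+y2)) = 1 ∧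
     y1*(1+y2)/(1+y1+y1*y2) + (1/(1+y1)) * ((1+y1)/(1+y1+y1*y2)) = 1 ∧
     y2/(1+y2) + ((1+y1)/(1+y1+y1*y2)) * ((1+y1+y1*y2)/((1+y1)*(1+y2))) = 1) := by
  refine ⟨?_, ?_, ?_, ?_, by rw [div_mul_div_cancel₀ h12']; field_simp; ring⟩ <;> field_simp <;> ring

/-- in the field ℂ(y₁,y₂), with `F₁₁ = 1+y₁`, `F₂₂ = 1+y₂`,
`F₁₂ = 1+y₁+y₁y₂`, the rational functions `f₁ = 1/F₁₁`, `f₂ = F₁₁/F₁₂`,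
`f_{Σ1} = y₁F₂₂/F₁₂`, `f_{Σ2} = y₂/F₂₂`, `f₁₂ = F₁₂/(F₁₁F₂₂)` satisfy the five
pentagon u-equations. -/
theorem pentagon_F_polynomial_parametrization :
    ∀ y1 y2 : FractionRing (MvPolynomial (Fin 2) ℂ),
      y1 = algebraMap (MvPolynomial (Fin 2) ℂ) (FractionRing (MvPolynomial (Fin 2) ℂ)) (X 0) →
      y2 = algebraMap (MvPolynomial (Fin 2) ℂ) (FractionRing (MvPolynomial (Fin 2) ℂ)) (X 1) →
      ∀ F11 F22 F12 f1 f2 fS1 fS2 f12 : FractionRing (MvPolynomial (Fin 2) ℂ),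
        F11 = 1 + y1 → F22 = 1 + y2 → F12 = 1 + y1 + y1 * y2 →
        f1 = 1 / F11 → f2 = F11 / F12 → fS1 = y1 * F22 / F12 →
        fS2 = y2 / F22 → f12 = F12 / (F11 * F22) →
        f12 + f1 * fS2 = 1 ∧
        f1 + f12 * fS1 = 1 ∧
        f2 + fS1 * fS2 = 1 ∧
        fS1 + f1 * f2 = 1 ∧
        fS2 + f2 * f12 = 1 := by
  intro y1 y2 hy1 hy2 F11 F22 F12 f1 f2 fS1 fS2 f12 h11 h22 h12 hf1 hf2 hS1 hS2 hf12
  have hinj : Function.Injective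
      (algebraMap (MvPolynomial (Fin 2) ℂ) (FractionRing (MvPolynomial (Fin 2) ℂ))) :=
    IsFractionRing.injective _ _
  have key : ∀ p : MvPolynomial (Fin 2) ℂ, constantCoeff p = 1 →
      algebraMap (MvPolynomial (Fin 2) ℂ) (FractionRing (MvPolynomial (Fin 2) ℂ)) p ≠ 0 := by
    intro p hp h
    have hp0 : p = 0 := hinj (h.trans (RingHom.map_zero _).symm)
    rw [hp0] at hp; simp at hp
  have h11' : (1 : FractionRing (MvPolynomial (Fin 2) ℂ)) + y1 ≠ 0 := by
    rw [hy1]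
    have := key (1 + X 0) (by simp)
    rwa [RingHom.map_add, RingHom.map_one] at this
  have h22' : (1 : FractionRing (MvPolynomial (Fin 2) ℂ)) + y2 ≠ 0 := by
    rw [hy2]
    have := key (1 + X 1) (by simp)
    rwa [RingHom.map_add, RingHom.map_one] at this
  have h12' : (1 : FractionRing (MvPolynomial (Fin 2) ℂ)) + y1 + y1 * y2 ≠ 0 := by
    rw [hy1, hy2]
    have := key (1 + X 0 + X 0 * X 1) (by simp)
    rwa [RingHom.map_add, RingHom.map_add, RingHom.map_one, RingHom.map_mul] at this
  subst h11 h22 h12 hf1 hf2 hS1 hS2 hf12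
  exact pentagon_aux y1 y2 h11' h22' h12'
end

section
/- The map sending a Dyck path D of length n to its set of valleys is a bijection between Dyck paths of length n and antichains in the poset of pairs (a,b) with 2 ≤ a ≤ b ≤ n-1 ordered by (a,b) ≼ (a',b') iff a ≥ a' and b ≤ b'. -/
/-- Number of up steps (`true`) among the first `k` steps of `s`. -/
def upsCount (n : ℕ) (s : Fin (2 * n) → Bool) (k : ℕ) : ℕ :=
  (Finset.univ.filter (fun i : Fin (2 * n) => (i : ℕ) < k ∧ s i = true)).card

/-- Number of down steps (`false`) among the first `k` steps of `s`. -/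
def downsCount (n : ℕ) (s : Fin (2 * n) → Bool) (k : ℕ) : ℕ :=
  (Finset.univ.filter (fun i : Fin (2 * n) => (i : ℕ) < k ∧ s i = false)).card

/-- A Dyck path of length `n`: `n` up steps among `2n` steps, and every prefix has
at least as many up steps as down steps (the path stays weakly above the baseline).
After `t` steps the path is at the lattice point `(1 + downsCount t, upsCount t)`. -/
def IsDyck (n : ℕ) (s : Fin (2 * n) → Bool) : Prop :=
  upsCount n s (2 * n) = n ∧ ∀ t ≤ 2 * n, downsCount n s t ≤ upsCount n s t

/-- The set of valleys of the path `s`: lattice points `(a,b)` immediately preceded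
by a down step and immediately followed by an up step. -/
def valleys (n : ℕ) (s : Fin (2 * n) → Bool) : Set (ℕ × ℕ) :=
  {p | ∃ t : ℕ, ∃ h : t + 1 < 2 * n,
    s ⟨t, by omega⟩ = false ∧ s ⟨t + 1, h⟩ = true ∧
    p.1 = 1 + downsCount n s (t + 1) ∧ p.2 = upsCount n s (t + 1)}

namespace DyckAux

variable {n : ℕ}

lemma count_succ (s : Fin (2*n) → Bool) (b : Bool) (k : ℕ) (hk : k < 2*n) :
    (Finset.univ.filter (fun i : Fin (2*n) => (i:ℕ) < k+1 ∧ s i = b)).card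
      = (Finset.univ.filter (fun i : Fin (2*n) => (i:ℕ) < k ∧ s i = b)).card
        + (if s ⟨k,hk⟩ = b then 1 else 0) := by
  have hsplit : (Finset.univ.filter (fun i : Fin (2*n) => (i:ℕ) < k+1 ∧ s i = b))
      = (Finset.univ.filter (fun i : Fin (2*n) => (i:ℕ) < k ∧ s i = b))
        ∪ (Finset.univ.filter (fun i : Fin (2*n) => i = ⟨k,hk⟩ ∧ s i = b)) := by
    ext i
    simp only [Finset.mem_filter, Finset.mem_union, Finset.mem_univ, true_and]
    constructor
    · rintro ⟨h1, h2⟩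
      rcases Nat.lt_succ_iff_lt_or_eq.mp h1 with h | h
      · exact Or.inl ⟨h, h2⟩
      · exact Or.inr ⟨Fin.ext h, h2⟩
    · rintro (⟨h1, h2⟩ | ⟨h1, h2⟩)
      · exact ⟨Nat.lt_succ_of_lt h1, h2⟩
      · refine ⟨?_, h2⟩
        rw [h1]; exact Nat.lt_succ_self k
  rw [hsplit, Finset.card_union_of_disjoint]
  · congr 1
    by_cases hb : s ⟨k,hk⟩ = b
    · rw [if_pos hb]
      have : (Finset.univ.filter (fun i : Fin (2*n) => i = ⟨k,hk⟩ ∧ s i = b))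
          = {⟨k,hk⟩} := by
        ext i
        simp only [Finset.mem_filter, Finset.mem_univ, true_and, Finset.mem_singleton]
        constructor
        · rintro ⟨h1, _⟩; exact h1
        · rintro rfl; exact ⟨rfl, hb⟩
      rw [this, Finset.card_singleton]
    · rw [if_neg hb]
      have : (Finset.univ.filter (fun i : Fin (2*n) => i = ⟨k,hk⟩ ∧ s i = b))
          = ∅ := by
        ext i
        simp only [Finset.mem_filter, Finset.mem_univ, true_and, Finset.notMem_empty,
          iff_false, not_and]
        rintro rfl h; exact hb h
      rw [this, Finset.card_empty]
  · rw [Finset.disjoint_left]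
    rintro i hi hi'
    simp only [Finset.mem_filter] at hi hi'
    rcases hi' with ⟨_, rfl, _⟩
    exact absurd hi.2.1 (by simp)

lemma upsCount_succ (s : Fin (2*n) → Bool) (k : ℕ) (hk : k < 2*n) :
    upsCount n s (k+1) = upsCount n s k + (if s ⟨k,hk⟩ = true then 1 else 0) :=
  count_succ s true k hk

lemma downsCount_succ (s : Fin (2*n) → Bool) (k : ℕ) (hk : k < 2*n) :
    downsCount n s (k+1) = downsCount n s k + (if s ⟨k,hk⟩ = false then 1 else 0) :=
  count_succ s false k hk

lemma upsCount_zero (s : Fin (2*n) → Bool) : upsCount n s 0 = 0 := by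
  unfold upsCount
  rw [Finset.card_eq_zero]
  ext i; simp

lemma downsCount_zero (s : Fin (2*n) → Bool) : downsCount n s 0 = 0 := by
  unfold downsCount
  rw [Finset.card_eq_zero]
  ext i; simp

lemma upsCount_mono (s : Fin (2*n) → Bool) {k m : ℕ} (h : k ≤ m) :
    upsCount n s k ≤ upsCount n s m := by
  apply Finset.card_le_card
  intro i hi
  simp only [Finset.mem_filter] at hi ⊢
  exact ⟨hi.1, lt_of_lt_of_le hi.2.1 h, hi.2.2⟩

lemma downsCount_mono (s : Fin (2*n) → Bool) {k m : ℕ} (h : k ≤ m) :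
    downsCount n s k ≤ downsCount n s m := by
  apply Finset.card_le_card
  intro i hi
  simp only [Finset.mem_filter] at hi ⊢
  exact ⟨hi.1, lt_of_lt_of_le hi.2.1 h, hi.2.2⟩

lemma ups_add_downs (s : Fin (2*n) → Bool) {k : ℕ} (h : k ≤ 2*n) :
    upsCount n s k + downsCount n s k = k := by
  induction k with
  | zero => simp [upsCount_zero, downsCount_zero]
  | succ m ih =>
    have hm : m < 2*n := h
    rw [upsCount_succ s m hm, downsCount_succ s m hm]
    have := ih (le_of_lt hm)
    cases hs : s ⟨m, hm⟩ <;> simp [hs] <;> omega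



/-- candidate set for the height function of the path reconstructed from valley set `A` -/
def cand (n : ℕ) (A : Set (ℕ × ℕ)) (t : ℕ) : Set ℕ :=
  insert (min t n) ((fun p : ℕ × ℕ => max p.2 (t + 1 - p.1)) '' A)

noncomputable def Y (n : ℕ) (A : Set (ℕ × ℕ)) (t : ℕ) : ℕ := sInf (cand n A t)

lemma cand_nonempty (n : ℕ) (A : Set (ℕ × ℕ)) (t : ℕ) : (cand n A t).Nonempty :=
  ⟨min t n, Set.mem_insert _ _⟩

lemma Y_mem (n : ℕ) (A : Set (ℕ × ℕ)) (t : ℕ) : Y n A t ∈ cand n A t :=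
  Nat.sInf_mem (cand_nonempty n A t)

lemma Y_le_min (n : ℕ) (A : Set (ℕ × ℕ)) (t : ℕ) : Y n A t ≤ min t n :=
  Nat.sInf_le (Set.mem_insert _ _)

lemma Y_le_cand (n : ℕ) (A : Set (ℕ × ℕ)) (t : ℕ) {p : ℕ × ℕ} (hp : p ∈ A) :
    Y n A t ≤ max p.2 (t + 1 - p.1) :=
  Nat.sInf_le (Set.mem_insert_of_mem _ ⟨p, hp, rfl⟩)

lemma le_Y (n : ℕ) (A : Set (ℕ × ℕ)) (t : ℕ) {c : ℕ}
    (h1 : c ≤ min t n) (h2 : ∀ p ∈ A, c ≤ max p.2 (t + 1 - p.1)) :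
    c ≤ Y n A t := by
  have hm := Y_mem n A t
  rcases hm with h | ⟨p, hp, h⟩
  · omega
  · rw [← h]; exact h2 p hp

lemma Y_cases (n : ℕ) (A : Set (ℕ × ℕ)) (t : ℕ) :
    Y n A t = min t n ∨ ∃ p ∈ A, Y n A t = max p.2 (t + 1 - p.1) := by
  rcases Y_mem n A t with h | ⟨p, hp, h⟩
  · exact Or.inl h
  · exact Or.inr ⟨p, hp, h.symm⟩

lemma Y_mono_succ (n : ℕ) (A : Set (ℕ × ℕ)) (t : ℕ) : Y n A t ≤ Y n A (t+1) := by
  rcases Y_cases n A (t+1) with h | ⟨p, hp, h⟩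
  · have := Y_le_min n A t; omega
  · have := Y_le_cand n A t hp
    have : max p.2 (t + 1 - p.1) ≤ max p.2 (t + 1 + 1 - p.1) := by
      apply max_le_max (le_refl _); omega
    omega

lemma Y_succ_le (n : ℕ) (A : Set (ℕ × ℕ)) (t : ℕ) : Y n A (t+1) ≤ Y n A t + 1 := by
  rcases Y_cases n A t with h | ⟨p, hp, h⟩
  · have := Y_le_min n A (t+1); omega
  · have h2 := Y_le_cand n A (t+1) hp
    have : max p.2 (t + 1 + 1 - p.1) ≤ max p.2 (t + 1 - p.1) + 1 := by
      rcases max_cases p.2 (t + 1 + 1 - p.1) with ⟨he, _⟩ | ⟨he, _⟩ <;> omega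
    omega



lemma ups_le_t (s : Fin (2*n) → Bool) {t : ℕ} (ht : t ≤ 2*n) :
    upsCount n s t ≤ t := by
  have := ups_add_downs s ht; omega

lemma ups_le_n (s : Fin (2*n) → Bool) (hs : IsDyck n s) (t : ℕ) :
    upsCount n s t ≤ n := by
  rcases le_or_gt t (2*n) with h | h
  · calc upsCount n s t ≤ upsCount n s (2*n) := upsCount_mono s h
      _ = n := hs.1
  · have : upsCount n s t ≤ upsCount n s t := le_refl _
    -- for t > 2n the filter is the same as for 2n
    have he : upsCount n s t = upsCount n s (2*n) := by
      unfold upsCount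
      congr 1
      apply Finset.filter_congr
      intro i _
      have : (i:ℕ) < 2*n := i.isLt
      constructor
      · rintro ⟨_, h2⟩; exact ⟨this, h2⟩
      · rintro ⟨_, h2⟩; exact ⟨by omega, h2⟩
    rw [he, hs.1]

lemma ups_le_cand (s : Fin (2*n) → Bool) (hs : IsDyck n s) {t : ℕ} (ht : t ≤ 2*n)
    {p : ℕ × ℕ} (hp : p ∈ valleys n s) :
    upsCount n s t ≤ max p.2 (t + 1 - p.1) := by
  obtain ⟨t₀, h, hdown, hup, hp1, hp2⟩ := hp
  rcases le_or_gt t (t₀+1) with hle | hgt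
  · exact le_max_of_le_left (hp2 ▸ upsCount_mono s hle)
  · have hUD := ups_add_downs s ht
    have hD : downsCount n s (t₀+1) ≤ downsCount n s t := downsCount_mono s (by omega)
    have hDle : downsCount n s (t₀+1) ≤ t₀+1 := by
      have := ups_add_downs s (le_of_lt h); omega
    apply le_max_of_le_right
    omega

lemma Y_le_ups (s : Fin (2*n) → Bool) (hs : IsDyck n s) {t : ℕ} (ht : t ≤ 2*n) :
    Y n (valleys n s) t ≤ upsCount n s t := by
  rcases le_or_gt (min t n) (upsCount n s t) with hmin | hmin
  · exact le_trans (Y_le_min n _ t) hmin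
  have hUD := ups_add_downs s ht
  have hUt : upsCount n s t < t := by omega
  have hUn : upsCount n s t < n := by omega
  have hD1 : 1 ≤ downsCount n s t := by omega
  set S : Finset (Fin (2*n)) :=
    Finset.univ.filter (fun i : Fin (2*n) => (i:ℕ) < t ∧ s i = false) with hS
  have hSne : S.Nonempty := by
    rw [← Finset.card_pos]
    exact lt_of_lt_of_le Nat.one_pos hD1
  set t₁ : Fin (2*n) := S.max' hSne with ht₁
  have ht₁S : t₁ ∈ S := S.max'_mem hSne
  have ht₁lt : (t₁:ℕ) < t := by
    have := (Finset.mem_filter.mp ht₁S).2.1; exact this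
  have ht₁f : s t₁ = false := (Finset.mem_filter.mp ht₁S).2.2
  have ht₁max : ∀ i : Fin (2*n), (i:ℕ) < t → s i = false → (i:ℕ) ≤ (t₁:ℕ) := by
    intro i hi hf
    exact S.le_max' i (Finset.mem_filter.mpr ⟨Finset.mem_univ i, hi, hf⟩)
  rcases lt_or_eq_of_le (Nat.succ_le_of_lt ht₁lt) with hcase | hcase
  · -- t₁ + 1 < t : valley at t₁
    have h1 : (t₁:ℕ)+1 < 2*n := lt_of_lt_of_le hcase ht
    have hup : s ⟨(t₁:ℕ)+1, h1⟩ = true := by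
      by_contra hf
      rw [Bool.not_eq_true] at hf
      have h2 : (t₁:ℕ)+1 ≤ (t₁:ℕ) := ht₁max ⟨(t₁:ℕ)+1, h1⟩ hcase hf
      omega
    have hpv : ((1 + downsCount n s ((t₁:ℕ)+1), upsCount n s ((t₁:ℕ)+1)) : ℕ × ℕ)
        ∈ valleys n s := by
      refine ⟨(t₁:ℕ), h1, ?_, hup, rfl, rfl⟩
      simpa using ht₁f
    have hcand := Y_le_cand n (valleys n s) t hpv
    have hDle : downsCount n s t ≤ downsCount n s ((t₁:ℕ)+1) := by
      apply Finset.card_le_card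
      intro i hi
      simp only [Finset.mem_filter, Finset.mem_univ, true_and] at hi ⊢
      refine ⟨?_, hi.2⟩
      have := ht₁max i hi.1 hi.2
      omega
    have hb : upsCount n s ((t₁:ℕ)+1) ≤ upsCount n s t := upsCount_mono s (by omega)
    have hDt₁ : upsCount n s ((t₁:ℕ)+1) + downsCount n s ((t₁:ℕ)+1) = (t₁:ℕ)+1 :=
      ups_add_downs s (by omega)
    have hX : t + 1 - (1 + downsCount n s ((t₁:ℕ)+1)) ≤ upsCount n s t := by omega
    have := max_le hb hX
    omega
  · -- t₁ + 1 = t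
    set S₂ : Finset (Fin (2*n)) :=
      Finset.univ.filter (fun i : Fin (2*n) => t ≤ (i:ℕ) ∧ s i = true) with hS₂
    have hS₂ne : S₂.Nonempty := by
      by_contra hne
      rw [Finset.not_nonempty_iff_eq_empty] at hne
      have hsub : (Finset.univ.filter (fun i : Fin (2*n) => (i:ℕ) < 2*n ∧ s i = true))
          ⊆ (Finset.univ.filter (fun i : Fin (2*n) => (i:ℕ) < t ∧ s i = true)) := by
        intro i hi
        simp only [Finset.mem_filter, Finset.mem_univ, true_and] at hi ⊢
        refine ⟨?_, hi.2⟩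
        by_contra hlt
        push_neg at hlt
        have : i ∈ S₂ := Finset.mem_filter.mpr ⟨Finset.mem_univ i, hlt, hi.2⟩
        rw [hne] at this
        exact absurd this (Finset.notMem_empty i)
      have : upsCount n s (2*n) ≤ upsCount n s t := Finset.card_le_card hsub
      rw [hs.1] at this
      omega
    set t₂ : Fin (2*n) := S₂.min' hS₂ne with ht₂
    have ht₂S : t₂ ∈ S₂ := S₂.min'_mem hS₂ne
    have ht₂ge : t ≤ (t₂:ℕ) := (Finset.mem_filter.mp ht₂S).2.1
    have ht₂u : s t₂ = true := (Finset.mem_filter.mp ht₂S).2.2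
    have ht₂min : ∀ i : Fin (2*n), t ≤ (i:ℕ) → s i = true → (t₂:ℕ) ≤ (i:ℕ) := by
      intro i hi hf
      exact S₂.min'_le i (Finset.mem_filter.mpr ⟨Finset.mem_univ i, hi, hf⟩)
    have htpos : 1 ≤ t := by omega
    have ht₂pos : 1 ≤ (t₂:ℕ) := by omega
    have ht₂lt : (t₂:ℕ) < 2*n := t₂.isLt
    have hdm1 : (t₂:ℕ) - 1 < 2*n := by omega
    have hdown : s ⟨(t₂:ℕ)-1, hdm1⟩ = false := by
      rcases lt_or_eq_of_le ht₂ge with hgt | heq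
      · by_contra hf
        rw [Bool.not_eq_false] at hf
        have h2 : (t₂:ℕ) ≤ (t₂:ℕ)-1 :=
          ht₂min ⟨(t₂:ℕ)-1, hdm1⟩ (by show t ≤ (t₂:ℕ)-1; omega) hf
        omega
      · have : (t₂:ℕ)-1 = (t₁:ℕ) := by omega
        rw [show (⟨(t₂:ℕ)-1, hdm1⟩ : Fin (2*n)) = t₁ from Fin.ext this]
        exact ht₁f
    have he1 : (t₂:ℕ) - 1 + 1 = (t₂:ℕ) := by omega
    have hpv : ((1 + downsCount n s ((t₂:ℕ)-1+1), upsCount n s ((t₂:ℕ)-1+1)) : ℕ × ℕ)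
        ∈ valleys n s := by
      refine ⟨(t₂:ℕ)-1, by omega, hdown, ?_, rfl, rfl⟩
      have : (⟨(t₂:ℕ)-1+1, by omega⟩ : Fin (2*n)) = t₂ := Fin.ext he1
      rw [this]; exact ht₂u
    rw [he1] at hpv
    have hcand := Y_le_cand n (valleys n s) t hpv
    have hUe : upsCount n s ((t₂:ℕ)) ≤ upsCount n s t := by
      apply Finset.card_le_card
      intro i hi
      simp only [Finset.mem_filter, Finset.mem_univ, true_and] at hi ⊢
      refine ⟨?_, hi.2⟩
      by_contra hlt
      push_neg at hlt
      have := ht₂min i hlt hi.2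
      omega
    have hDge : downsCount n s t ≤ downsCount n s ((t₂:ℕ)) := downsCount_mono s ht₂ge
    have hDt₂ : upsCount n s ((t₂:ℕ)) + downsCount n s ((t₂:ℕ)) = (t₂:ℕ) :=
      ups_add_downs s (by omega)
    have hX : t + 1 - (1 + downsCount n s ((t₂:ℕ))) ≤ upsCount n s t := by omega
    have := max_le hUe hX
    omega

lemma ups_eq_Y (s : Fin (2*n) → Bool) (hs : IsDyck n s) {t : ℕ} (ht : t ≤ 2*n) :
    upsCount n s t = Y n (valleys n s) t := by
  refine le_antisymm ?_ (Y_le_ups s hs ht)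
  refine le_Y n _ t ?_ ?_
  · have := ups_le_t s ht
    have := ups_le_n s hs t
    omega
  · intro p hp
    exact ups_le_cand s hs ht hp


lemma valleys_bounds (s : Fin (2*n) → Bool) (hs : IsDyck n s) {p : ℕ × ℕ}
    (hp : p ∈ valleys n s) : 2 ≤ p.1 ∧ p.1 ≤ p.2 + 1 ∧ p.2 ≤ n - 1 := by
  obtain ⟨t, h, hdown, hup, hp1, hp2⟩ := hp
  have hD1 : 1 ≤ downsCount n s (t+1) := by
    rw [Nat.one_le_iff_ne_zero]
    intro hzero
    have hmem : (⟨t, by omega⟩ : Fin (2*n)) ∈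
        Finset.univ.filter (fun i : Fin (2*n) => (i:ℕ) < t+1 ∧ s i = false) :=
      Finset.mem_filter.mpr ⟨Finset.mem_univ _, by show t < t+1; omega, hdown⟩
    unfold downsCount at hzero
    rw [Finset.card_eq_zero] at hzero
    rw [hzero] at hmem
    exact absurd hmem (Finset.notMem_empty _)
  have hDU : downsCount n s (t+1) ≤ upsCount n s (t+1) := hs.2 (t+1) (by omega)
  have hU2 : upsCount n s (t+2) = upsCount n s (t+1) + 1 := by
    rw [upsCount_succ s (t+1) h, hup]
    simp
  have hU2n : upsCount n s (t+2) ≤ n := ups_le_n s hs (t+2)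
  omega

lemma valleys_antichain (s : Fin (2*n) → Bool) {p q : ℕ × ℕ}
    (hp : p ∈ valleys n s) (hq : q ∈ valleys n s)
    (h1 : q.1 ≤ p.1) (h2 : p.2 ≤ q.2) : p = q := by
  obtain ⟨t, h, hdown, hup, hp1, hp2⟩ := hp
  obtain ⟨t', h', hdown', hup', hq1, hq2⟩ := hq
  rcases lt_trichotomy t t' with hlt | heq | hgt
  · -- p.1 < q.1 : contradiction with h1
    exfalso
    have hm : downsCount n s (t+1) ≤ downsCount n s t' := downsCount_mono s (by omega)
    have hsucc : downsCount n s (t'+1) = downsCount n s t' + 1 := by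
      rw [downsCount_succ s t' (by omega), hdown']
      simp
    omega
  · subst heq
    apply Prod.ext <;> omega
  · -- q.2 < p.2 : contradiction with h2
    exfalso
    have hsucc : upsCount n s (t'+2) = upsCount n s (t'+1) + 1 := by
      rw [upsCount_succ s (t'+1) h', hup']
      simp
    have hm : upsCount n s (t'+2) ≤ upsCount n s (t+1) := upsCount_mono s (by omega)
    omega

/-- the path reconstructed from a set of valleys -/
noncomputable def g (n : ℕ) (A : Set (ℕ × ℕ)) : Fin (2*n) → Bool :=
  fun i => decide (Y n A (i:ℕ) < Y n A ((i:ℕ)+1))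

lemma dyck_step (s : Fin (2*n) → Bool) (i : Fin (2*n)) :
    s i = decide (upsCount n s (i:ℕ) < upsCount n s ((i:ℕ)+1)) := by
  have hsucc := upsCount_succ s (i:ℕ) i.isLt
  rw [Fin.eta] at hsucc
  cases h : s i
  · rw [h, if_neg (by simp)] at hsucc
    symm
    rw [decide_eq_false_iff_not]
    omega
  · rw [h, if_pos rfl] at hsucc
    symm
    rw [decide_eq_true_eq]
    omega

lemma Y_zero (A : Set (ℕ × ℕ)) : Y n A 0 = 0 := by
  have := Y_le_min n A 0
  omega

lemma ups_g_eq_Y (A : Set (ℕ × ℕ)) : ∀ t ≤ 2*n, upsCount n (g n A) t = Y n A t := by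
  intro t ht
  induction t with
  | zero => rw [upsCount_zero, Y_zero]
  | succ m ih =>
    have hm : m < 2*n := ht
    rw [upsCount_succ (g n A) m hm, ih (by omega)]
    have h1 := Y_mono_succ n A m
    have h2 := Y_succ_le n A m
    by_cases hc : Y n A m < Y n A (m+1)
    · rw [if_pos]
      · omega
      · simp only [g]
        rw [decide_eq_true_eq]
        exact hc
    · rw [if_neg]
      · omega
      · simp only [g]
        rw [decide_eq_true_eq]
        exact hc

lemma Y_final (hn : 1 ≤ n) (A : Set (ℕ × ℕ))
    (hb : ∀ p ∈ A, 2 ≤ p.1 ∧ p.1 ≤ p.2 + 1 ∧ p.2 ≤ n - 1) :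
    Y n A (2*n) = n := by
  have h1 := Y_le_min n A (2*n)
  have h2 : n ≤ Y n A (2*n) := by
    refine le_Y n A (2*n) (by omega) ?_
    intro p hp
    obtain ⟨ha2, hab, hbn⟩ := hb p hp
    apply le_max_of_le_right
    omega
  omega

lemma g_isDyck (hn : 1 ≤ n) (A : Set (ℕ × ℕ))
    (hb : ∀ p ∈ A, 2 ≤ p.1 ∧ p.1 ≤ p.2 + 1 ∧ p.2 ≤ n - 1) :
    IsDyck n (g n A) := by
  constructor
  · rw [ups_g_eq_Y A (2*n) (le_refl _), Y_final hn A hb]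
  · intro t ht
    have hUD := ups_add_downs (g n A) ht
    rw [ups_g_eq_Y A t ht] at hUD ⊢
    have h2Y : t ≤ 2 * Y n A t := by
      rcases Y_cases n A t with h | ⟨p, hp, h⟩
      · omega
      · obtain ⟨ha2, hab, hbn⟩ := hb p hp
        have hm1 : p.2 ≤ max p.2 (t+1-p.1) := le_max_left _ _
        have hm2 : t+1-p.1 ≤ max p.2 (t+1-p.1) := le_max_right _ _
        omega
    omega

lemma tricho (A : Set (ℕ × ℕ))
    (hanti : ∀ p ∈ A, ∀ q ∈ A, q.1 ≤ p.1 → p.2 ≤ q.2 → p = q)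
    {p q : ℕ × ℕ} (hp : p ∈ A) (hq : q ∈ A) (hne : p ≠ q) :
    (p.1 < q.1 ∧ p.2 < q.2) ∨ (q.1 < p.1 ∧ q.2 < p.2) := by
  have h1 : ¬(q.1 ≤ p.1 ∧ p.2 ≤ q.2) := fun ⟨ha, hb⟩ => hne (hanti p hp q hq ha hb)
  have h2 : ¬(p.1 ≤ q.1 ∧ q.2 ≤ p.2) := fun ⟨ha, hb⟩ => hne ((hanti q hq p hp ha hb).symm)
  omega

lemma Y_near (hn : 1 ≤ n) (A : Set (ℕ × ℕ))
    (hb : ∀ p ∈ A, 2 ≤ p.1 ∧ p.1 ≤ p.2 + 1 ∧ p.2 ≤ n - 1)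
    (hanti : ∀ p ∈ A, ∀ q ∈ A, q.1 ≤ p.1 → p.2 ≤ q.2 → p = q)
    {a b : ℕ} (hp : (a, b) ∈ A) {T : ℕ} (h1 : a + b ≤ T + 2) (h2 : T ≤ a + b) :
    Y n A T = max b (T + 1 - a) := by
  obtain ⟨ha2, hab, hbn⟩ := hb (a, b) hp
  refine le_antisymm (Y_le_cand n A T hp) (le_Y n A T ?_ ?_)
  · rcases max_cases b (T + 1 - a) with ⟨he, _⟩ | ⟨he, _⟩ <;> omega
  · intro q hq
    by_cases hqp : q = (a, b)
    · subst hqp; exact le_refl _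
    · obtain ⟨hc1, hc2⟩ | ⟨hc1, hc2⟩ := tricho A hanti hq hp hqp <;>
      · simp only at hc1 hc2
        rcases max_cases b (T + 1 - a) with ⟨he, _⟩ | ⟨he, _⟩ <;>
        rcases max_cases q.2 (T + 1 - q.1) with ⟨he2, _⟩ | ⟨he2, _⟩ <;>
        omega

lemma valleys_g (hn : 1 ≤ n) (A : Set (ℕ × ℕ))
    (hb : ∀ p ∈ A, 2 ≤ p.1 ∧ p.1 ≤ p.2 + 1 ∧ p.2 ≤ n - 1)
    (hanti : ∀ p ∈ A, ∀ q ∈ A, q.1 ≤ p.1 → p.2 ≤ q.2 → p = q) :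
    valleys n (g n A) = A := by
  apply Set.eq_of_subset_of_subset
  · -- valleys (g A) ⊆ A
    rintro q ⟨t, h, hdown, hup, hq1, hq2⟩
    have hYt1 : Y n A t ≤ t := le_trans (Y_le_min n A t) (min_le_left _ _)
    have hYt2 : Y n A t ≤ n := le_trans (Y_le_min n A t) (min_le_right _ _)
    have hY21 : Y n A (t+2) ≤ t+2 := le_trans (Y_le_min n A (t+2)) (min_le_left _ _)
    have hY22 : Y n A (t+2) ≤ n := le_trans (Y_le_min n A (t+2)) (min_le_right _ _)
    have hnorm : Y n A (t+1+1) = Y n A (t+2) := rfl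
    have hmono1 := Y_mono_succ n A t
    have hmono2 := Y_mono_succ n A (t+1)
    have hstep2 := Y_succ_le n A (t+1)
    have hdown' : ¬ (Y n A t < Y n A (t+1)) := by
      have : g n A ⟨t, by omega⟩ = false := hdown
      simp only [g] at this
      rw [decide_eq_false_iff_not] at this
      exact this
    have hup' : Y n A (t+1) < Y n A (t+1+1) := by
      have : g n A ⟨t+1, h⟩ = true := hup
      simp only [g] at this
      rw [decide_eq_true_eq] at this
      exact this
    set c := Y n A (t+1) with hc
    have hceq : Y n A t = c := by omega
    have hc2 : Y n A (t+2) = c + 1 := by omega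
    have hclet : c ≤ t := by omega
    have hq1' : q.1 = t + 2 - c := by
      rw [hq1]
      have hU := ups_g_eq_Y A (t+1) (show t+1 ≤ 2*n by omega)
      have hUD := ups_add_downs (g n A) (show t+1 ≤ 2*n by omega)
      omega
    have hq2' : q.2 = c := by
      rw [hq2, ups_g_eq_Y A (t+1) (show t+1 ≤ 2*n by omega)]
    rcases Y_cases n A (t+1) with hach | ⟨p, hp, hach⟩
    · exfalso
      rcases min_cases (t+1) n with ⟨he, _⟩ | ⟨he, _⟩ <;> rw [he] at hach
      · omega
      · rcases min_cases (t+2) n with ⟨he2, _⟩ | ⟨he2, _⟩ <;> omega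
    · obtain ⟨a, b⟩ := p
      simp only at hach
      have hmax1 : b ≤ c := by rw [hc, hach]; exact le_max_left _ _
      have hmax2 : t + 2 - a ≤ c := by
        rw [hc, hach]
        have := le_max_right b (t + 1 + 1 - a)
        omega
      have hbc : b = c := by
        by_contra hbc
        have hblt : b < c := by omega
        have hca : c = t + 2 - a := by
          rcases max_cases b (t + 1 + 1 - a) with ⟨he, _⟩ | ⟨he, _⟩ <;> omega
        have hYle := Y_le_cand n A t hp
        simp only at hYle
        have : max b (t + 1 - a) ≤ c - 1 := by
          rcases max_cases b (t + 1 - a) with ⟨he, _⟩ | ⟨he, _⟩ <;> omega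
        omega
      have haeq : a = t + 2 - c := by
        by_contra hane
        have halt : t + 3 - c ≤ a := by omega
        have hYle := Y_le_cand n A (t+2) hp
        simp only at hYle
        have : max b (t + 2 + 1 - a) ≤ c := by
          rcases max_cases b (t + 2 + 1 - a) with ⟨he, _⟩ | ⟨he, _⟩ <;> omega
        omega
      have : q = (a, b) := by
        apply Prod.ext <;> simp <;> omega
      rw [this]
      exact hp
  · -- A ⊆ valleys (g A)
    rintro ⟨a, b⟩ hp
    obtain ⟨ha2, hab, hbn⟩ := hb (a, b) hp
    have hY1 : Y n A (a+b-2) = b := by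
      rw [Y_near hn A hb hanti hp (by omega) (by omega)]
      rcases max_cases b (a+b-2+1-a) with ⟨he, _⟩ | ⟨he, _⟩ <;> omega
    have hY2 : Y n A (a+b-1) = b := by
      rw [Y_near hn A hb hanti hp (by omega) (by omega)]
      rcases max_cases b (a+b-1+1-a) with ⟨he, _⟩ | ⟨he, _⟩ <;> omega
    have hY3 : Y n A (a+b) = b + 1 := by
      rw [Y_near hn A hb hanti hp (by omega) (by omega)]
      rcases max_cases b (a+b+1-a) with ⟨he, _⟩ | ⟨he, _⟩ <;> omega
    have hlt : a + b - 1 < 2*n := by omega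
    refine ⟨a+b-2, by omega, ?_, ?_, ?_, ?_⟩
    · show g n A ⟨a+b-2, by omega⟩ = false
      simp only [g]
      rw [decide_eq_false_iff_not]
      have he : a+b-2+1 = a+b-1 := by omega
      rw [he, hY1, hY2]
      omega
    · show g n A ⟨a+b-2+1, by omega⟩ = true
      simp only [g]
      rw [decide_eq_true_eq]
      have he : a+b-2+1 = a+b-1 := by omega
      have he2 : a+b-2+1+1 = a+b := by omega
      rw [he2, he, hY2, hY3]
      omega
    · show a = 1 + downsCount n (g n A) (a+b-2+1)
      have he : a+b-2+1 = a+b-1 := by omega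
      rw [he]
      have hU := ups_g_eq_Y A (a+b-1) (show a+b-1 ≤ 2*n by omega)
      have hUD := ups_add_downs (g n A) (show a+b-1 ≤ 2*n by omega)
      omega
    · show b = upsCount n (g n A) (a+b-2+1)
      have he : a+b-2+1 = a+b-1 := by omega
      rw [he, ups_g_eq_Y A (a+b-1) (show a+b-1 ≤ 2*n by omega), hY2]

end DyckAux

/-- sending a Dyck path to its set of valleys is a bijection between
Dyck paths of length `n` and antichains in the poset of lattice points that can be
valleys (`a ≥ 2`, `b ≥ a - 1`, `b ≤ n - 1`), ordered by
`(a,b) ≼ (a',b') ↔ a ≥ a' ∧ b ≤ b'`. -/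
theorem dyck_valleys_bijection (n : ℕ) (hn : 1 ≤ n) :
    Set.BijOn (fun D : {s : Fin (2 * n) → Bool // IsDyck n s} => valleys n D.val)
      Set.univ
      {A : Set (ℕ × ℕ) |
        (∀ p ∈ A, 2 ≤ p.1 ∧ p.1 ≤ p.2 + 1 ∧ p.2 ≤ n - 1) ∧
        (∀ p ∈ A, ∀ q ∈ A, q.1 ≤ p.1 → p.2 ≤ q.2 → p = q)} := by

  refine ⟨?_, ?_, ?_⟩
  · -- maps to
    rintro ⟨s, hs⟩ -
    simp only [Set.mem_setOf_eq]
    exact ⟨fun p hp => DyckAux.valleys_bounds s hs hp,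
      fun p hp q hq h1 h2 => DyckAux.valleys_antichain s hp hq h1 h2⟩
  · -- injective
    rintro ⟨s₁, hs₁⟩ - ⟨s₂, hs₂⟩ - hval
    simp only at hval
    apply Subtype.ext
    funext i
    show s₁ i = s₂ i
    rw [DyckAux.dyck_step s₁ i, DyckAux.dyck_step s₂ i]
    have h1 := DyckAux.ups_eq_Y s₁ hs₁ (show (i:ℕ) ≤ 2*n from le_of_lt i.isLt)
    have h2 := DyckAux.ups_eq_Y s₁ hs₁ (show (i:ℕ)+1 ≤ 2*n from i.isLt)
    have h3 := DyckAux.ups_eq_Y s₂ hs₂ (show (i:ℕ) ≤ 2*n from le_of_lt i.isLt)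
    have h4 := DyckAux.ups_eq_Y s₂ hs₂ (show (i:ℕ)+1 ≤ 2*n from i.isLt)
    rw [h1, h2, h3, h4, hval]
  · -- surjective
    rintro A ⟨hb, hanti⟩
    exact ⟨⟨DyckAux.g n A, DyckAux.g_isDyck hn A hb⟩, Set.mem_univ _,
      DyckAux.valleys_g hn A hb hanti⟩
end

section
/- Let D be a Dyck path of length n and I_D the two-sided ideal of ℂA_n generated by the paths p_{a,b} = α_b ⋯ α_{a-1} for each valley (a,b) of D. Then an indecomposable module M_{i,j} (for 1 ≤ i ≤ j ≤ n) of ℂA_n is annihilated by I_D (i.e., is a module over ℂA_n/I_D) if and only if the point (i,j) lies on or below D. -/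
/-- The grid point `(i,j)` (position of the indecomposable `M_{i,j}`) lies on or
below the Dyck path `s`. -/
def OnOrBelow (n : ℕ) (s : Fin (2 * n) → Bool) (i j : ℕ) : Prop :=
  j ≤ upsCount n s (i + j - 1)

lemma count_succ (n : ℕ) (s : Fin (2 * n) → Bool) (k : ℕ) (hk : k < 2 * n) (b : Bool) :
    (Finset.univ.filter (fun i : Fin (2 * n) => (i : ℕ) < k + 1 ∧ s i = b)).card =
    (Finset.univ.filter (fun i : Fin (2 * n) => (i : ℕ) < k ∧ s i = b)).card +
      (if s ⟨k, hk⟩ = b then 1 else 0) := by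
  classical
  have hset : (Finset.univ.filter (fun i : Fin (2 * n) => (i : ℕ) < k + 1 ∧ s i = b)) =
      (Finset.univ.filter (fun i : Fin (2 * n) => (i : ℕ) < k ∧ s i = b)) ∪
      (Finset.univ.filter (fun i : Fin (2 * n) => (i : ℕ) = k ∧ s i = b)) := by
    ext x
    simp only [Finset.mem_filter, Finset.mem_union, Finset.mem_univ, true_and]
    constructor
    · rintro ⟨hlt, hs⟩
      rcases Nat.lt_succ_iff_lt_or_eq.mp hlt with h | h
      · exact Or.inl ⟨h, hs⟩
      · exact Or.inr ⟨h, hs⟩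
    · rintro (⟨hlt, hs⟩ | ⟨heq, hs⟩) <;> exact ⟨by omega, hs⟩
  have hdisj : Disjoint
      (Finset.univ.filter (fun i : Fin (2 * n) => (i : ℕ) < k ∧ s i = b))
      (Finset.univ.filter (fun i : Fin (2 * n) => (i : ℕ) = k ∧ s i = b)) := by
    rw [Finset.disjoint_left]
    intro x hx hx'
    simp only [Finset.mem_filter] at hx hx'
    omega
  rw [hset, Finset.card_union_of_disjoint hdisj]
  congr 1
  by_cases h : s ⟨k, hk⟩ = b
  · rw [if_pos h]
    have : (Finset.univ.filter (fun i : Fin (2 * n) => (i : ℕ) = k ∧ s i = b)) = {⟨k, hk⟩} := by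
      ext x
      simp only [Finset.mem_filter, Finset.mem_univ, true_and, Finset.mem_singleton, Fin.ext_iff]
      constructor
      · rintro ⟨h1, _⟩; exact h1
      · rintro h1
        have : x = ⟨k, hk⟩ := Fin.ext h1
        subst this; exact ⟨rfl, h⟩
    rw [this, Finset.card_singleton]
  · rw [if_neg h]
    have : (Finset.univ.filter (fun i : Fin (2 * n) => (i : ℕ) = k ∧ s i = b)) = ∅ := by
      ext x
      simp only [Finset.mem_filter, Finset.mem_univ, true_and, Finset.notMem_empty, iff_false,
        not_and]
      intro h1
      have : x = ⟨k, hk⟩ := Fin.ext h1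
      subst this
      exact h
    rw [this, Finset.card_empty]

lemma upsCount_succ (n : ℕ) (s : Fin (2 * n) → Bool) (k : ℕ) (hk : k < 2 * n) :
    upsCount n s (k + 1) = upsCount n s k + (if s ⟨k, hk⟩ = true then 1 else 0) :=
  count_succ n s k hk true

lemma downsCount_succ (n : ℕ) (s : Fin (2 * n) → Bool) (k : ℕ) (hk : k < 2 * n) :
    downsCount n s (k + 1) = downsCount n s k + (if s ⟨k, hk⟩ = false then 1 else 0) :=
  count_succ n s k hk false

lemma upsCount_mono (n : ℕ) (s : Fin (2 * n) → Bool) {k l : ℕ} (h : k ≤ l) :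
    upsCount n s k ≤ upsCount n s l := by
  apply Finset.card_le_card
  intro x hx
  simp only [Finset.mem_filter, Finset.mem_univ, true_and] at *
  exact ⟨lt_of_lt_of_le hx.1 h, hx.2⟩

lemma downsCount_mono (n : ℕ) (s : Fin (2 * n) → Bool) {k l : ℕ} (h : k ≤ l) :
    downsCount n s k ≤ downsCount n s l := by
  apply Finset.card_le_card
  intro x hx
  simp only [Finset.mem_filter, Finset.mem_univ, true_and] at *
  exact ⟨lt_of_lt_of_le hx.1 h, hx.2⟩

lemma counts_sum (n : ℕ) (s : Fin (2 * n) → Bool) :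
    ∀ k ≤ 2 * n, upsCount n s k + downsCount n s k = k := by
  intro k
  induction k with
  | zero =>
    intro _
    simp [upsCount, downsCount]
  | succ k ih =>
    intro hk
    have hk' : k < 2 * n := by omega
    rw [upsCount_succ n s k hk', downsCount_succ n s k hk']
    have := ih (by omega)
    cases h : s ⟨k, hk'⟩ <;> simp [h] <;> omega


lemma upsCount_eq_of_all_false (n : ℕ) (s : Fin (2 * n) → Bool) (p q : ℕ)
    (hpq : p ≤ q) (hq : q ≤ 2 * n)
    (h : ∀ r, ∀ hr : r < 2 * n, p ≤ r → r < q → s ⟨r, hr⟩ = false) :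
    upsCount n s q = upsCount n s p := by
  induction q, hpq using Nat.le_induction with
  | base => rfl
  | succ q hq' ih =>
    have hq2 : q < 2 * n := by omega
    rw [upsCount_succ n s q hq2, h q hq2 hq' (by omega), ih (by omega)
      (fun r hr h1 h2 => h r hr h1 (by omega))]
    simp

lemma downsCount_eq_of_all_true (n : ℕ) (s : Fin (2 * n) → Bool) (p q : ℕ)
    (hpq : p ≤ q) (hq : q ≤ 2 * n)
    (h : ∀ r, ∀ hr : r < 2 * n, p ≤ r → r < q → s ⟨r, hr⟩ = true) :
    downsCount n s q = downsCount n s p := by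
  induction q, hpq using Nat.le_induction with
  | base => rfl
  | succ q hq' ih =>
    have hq2 : q < 2 * n := by omega
    rw [downsCount_succ n s q hq2, h q hq2 hq' (by omega), ih (by omega)
      (fun r hr h1 h2 => h r hr h1 (by omega))]
    simp

lemma exists_false_lt (n : ℕ) (s : Fin (2 * n) → Bool) (m : ℕ)
    (hm : 1 ≤ downsCount n s m) :
    ∃ x : Fin (2 * n), (x : ℕ) < m ∧ s x = false := by
  have hne := Finset.card_pos.mp (by omega : 0 < downsCount n s m)
  obtain ⟨x, hx⟩ := hne
  simp only [Finset.mem_filter, Finset.mem_univ, true_and] at hx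
  exact ⟨x, hx.1, hx.2⟩

lemma exists_true_ge (n : ℕ) (s : Fin (2 * n) → Bool) (m : ℕ) (hm2 : m ≤ 2 * n)
    (hm : upsCount n s m < upsCount n s (2 * n)) :
    ∃ x : Fin (2 * n), m ≤ (x : ℕ) ∧ s x = true := by
  by_contra hcon
  push_neg at hcon
  have : upsCount n s (2 * n) = upsCount n s m := by
    apply upsCount_eq_of_all_false n s m (2 * n) hm2 le_rfl
    intro r hr h1 _
    have := hcon ⟨r, hr⟩ h1
    simpa using this
  omega

/-- the indecomposable module `M_{i,j}` of ℂAₙ is annihilated by the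
ideal `I_D` (equivalently, for each valley `(a,b)` of `D` the composite of the
structure maps of `M_{i,j}` along the path `p_{a,b} = α_b ⋯ α_{a-1}` — which acts
as the scalar `∏_{k∈[a-1,b]} (1 if [k,k+1] ⊆ [i,j] else 0)` — vanishes) if and
only if the point `(i,j)` lies on or below `D`. -/
theorem module_annihilated_iff_onOrBelow (n : ℕ) (s : Fin (2 * n) → Bool)
    (hD : IsDyck n s) (i j : ℕ) (h1 : 1 ≤ i) (h2 : i ≤ j) (h3 : j ≤ n) :
    (∀ a b : ℕ, (a, b) ∈ valleys n s →
      (∏ k ∈ Finset.Icc (a - 1) b, (if i ≤ k ∧ k + 1 ≤ j then (1 : ℂ) else 0)) = 0)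
      ↔ OnOrBelow n s i j := by
  classical
  obtain ⟨hDn, hDle⟩ := hD
  set m := i + j - 1 with hmdef
  have hm2n : m ≤ 2 * n := by omega
  have hsum_m : upsCount n s m + downsCount n s m = m := counts_sum n s m hm2n
  constructor
  · -- annihilated → on or below
    intro hann
    by_contra hnot
    unfold OnOrBelow at hnot
    push_neg at hnot
    rw [← hmdef] at hnot
    have hdm : i ≤ downsCount n s m := by omega
    -- least true step u ≥ m
    have hup : upsCount n s m < upsCount n s (2 * n) := by rw [hDn]; omega
    obtain ⟨u, hmu, hsu, humin⟩ : ∃ u : ℕ, m ≤ u ∧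
        (∃ hu : u < 2 * n, s ⟨u, hu⟩ = true) ∧
        ∀ r : ℕ, ∀ hr : r < 2 * n, m ≤ r → s ⟨r, hr⟩ = true → u ≤ r := by
      have hTne : (Finset.univ.filter
          (fun r : Fin (2 * n) => m ≤ (r : ℕ) ∧ s r = true)).Nonempty := by
        obtain ⟨x, hx1, hx2⟩ := exists_true_ge n s m hm2n hup
        refine ⟨x, ?_⟩
        simp only [Finset.mem_filter, Finset.mem_univ, true_and]
        exact ⟨hx1, hx2⟩
      set T := Finset.univ.filter (fun r : Fin (2 * n) => m ≤ (r : ℕ) ∧ s r = true) with hT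
      have huT := T.min'_mem hTne
      simp only [hT, Finset.mem_filter, Finset.mem_univ, true_and] at huT
      refine ⟨(T.min' hTne : Fin (2 * n)), huT.1, ⟨(T.min' hTne).isLt, ?_⟩, ?_⟩
      · have : (⟨((T.min' hTne : Fin (2 * n)) : ℕ), (T.min' hTne).isLt⟩ : Fin (2 * n))
            = T.min' hTne := Fin.ext rfl
        rw [this]; exact huT.2
      · intro r hr hmr hsr
        exact T.min'_le ⟨r, hr⟩ (by
          simp only [hT, Finset.mem_filter, Finset.mem_univ, true_and]
          exact ⟨hmr, hsr⟩)
    obtain ⟨hu2n, hsu⟩ := hsu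
    -- no true step in [m, u)
    have hnotrue : ∀ r : ℕ, ∀ hr : r < 2 * n, m ≤ r → r < u → s ⟨r, hr⟩ = false := by
      intro r hr hmr hru
      cases hsr : s ⟨r, hr⟩ with
      | false => rfl
      | true => exact absurd (humin r hr hmr hsr) (by omega)
    -- greatest false step t < u
    obtain ⟨t, htu, ⟨ht2n, hst⟩, htmax⟩ : ∃ t : ℕ, t < u ∧
        (∃ ht : t < 2 * n, s ⟨t, ht⟩ = false) ∧
        ∀ r : ℕ, ∀ hr : r < 2 * n, r < u → s ⟨r, hr⟩ = false → r ≤ t := by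
      have hFne : (Finset.univ.filter
          (fun r : Fin (2 * n) => (r : ℕ) < u ∧ s r = false)).Nonempty := by
        obtain ⟨x, hx1, hx2⟩ := exists_false_lt n s m (by omega)
        refine ⟨x, ?_⟩
        simp only [Finset.mem_filter, Finset.mem_univ, true_and]
        exact ⟨by omega, hx2⟩
      set F := Finset.univ.filter (fun r : Fin (2 * n) => (r : ℕ) < u ∧ s r = false) with hF
      have htF := F.max'_mem hFne
      simp only [hF, Finset.mem_filter, Finset.mem_univ, true_and] at htF
      refine ⟨(F.max' hFne : Fin (2 * n)), htF.1, ⟨(F.max' hFne).isLt, ?_⟩, ?_⟩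
      · have : (⟨((F.max' hFne : Fin (2 * n)) : ℕ), (F.max' hFne).isLt⟩ : Fin (2 * n))
            = F.max' hFne := Fin.ext rfl
        rw [this]; exact htF.2
      · intro r hr hru hsr
        exact F.le_max' ⟨r, hr⟩ (by
          simp only [hF, Finset.mem_filter, Finset.mem_univ, true_and]
          exact ⟨hru, hsr⟩)
    have ht1 : t + 1 < 2 * n := by omega
    -- s (t+1) = true
    have hst1 : s ⟨t + 1, ht1⟩ = true := by
      rcases eq_or_lt_of_le (by omega : t + 1 ≤ u) with heq | hlt
      · have : (⟨t + 1, ht1⟩ : Fin (2 * n)) = ⟨u, hu2n⟩ := Fin.ext heq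
        rw [this]; exact hsu
      · cases hsr : s ⟨t + 1, ht1⟩ with
        | true => rfl
        | false => exact absurd (htmax _ ht1 hlt hsr) (by omega)
    -- key bounds
    have hkey : i ≤ downsCount n s (t + 1) ∧ upsCount n s (t + 1) < j := by
      rcases le_or_gt (t + 1) m with hcase | hcase
      · constructor
        · have heq : downsCount n s m = downsCount n s (t + 1) := by
            apply downsCount_eq_of_all_true n s _ _ hcase hm2n
            intro r hr hr1 hr2
            cases hsr : s ⟨r, hr⟩ with
            | true => rfl
            | false => exact absurd (htmax r hr (by omega) hsr) (by omega)
          omega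
        · exact lt_of_le_of_lt (upsCount_mono n s hcase) hnot
      · constructor
        · exact le_trans hdm (downsCount_mono n s (by omega))
        · have heq : upsCount n s (t + 1) = upsCount n s m := by
            apply upsCount_eq_of_all_false n s m _ (by omega) (by omega)
            intro r hr hr1 hr2
            exact hnotrue r hr hr1 (by omega)
          omega
    -- apply hypothesis to this valley
    have hmem : ((1 + downsCount n s (t + 1), upsCount n s (t + 1)) : ℕ × ℕ)
        ∈ valleys n s := by
      refine ⟨t, ht1, ?_, hst1, rfl, rfl⟩
      exact hst
    have hprod := hann _ _ hmem
    have hone : (∏ k ∈ Finset.Icc (1 + downsCount n s (t + 1) - 1)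
        (upsCount n s (t + 1)),
        (if i ≤ k ∧ k + 1 ≤ j then (1 : ℂ) else 0)) = 1 := by
      apply Finset.prod_eq_one
      intro k hk
      rw [Finset.mem_Icc] at hk
      rw [if_pos ⟨by omega, by omega⟩]
    rw [hone] at hprod
    exact one_ne_zero hprod
  · -- on or below → annihilated
    intro hOB a b hval
    unfold OnOrBelow at hOB
    rw [← hmdef] at hOB
    obtain ⟨t, ht1, hst, hst1, ha, hb⟩ := hval
    have ha' : a = 1 + downsCount n s (t + 1) := ha
    have hb' : b = upsCount n s (t + 1) := hb
    have hab : a - 1 ≤ b := by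
      have := hDle (t + 1) (by omega)
      omega
    rcases lt_or_ge (downsCount n s (t + 1)) i with hcase | hcase
    · apply Finset.prod_eq_zero (Finset.mem_Icc.mpr ⟨le_refl (a - 1), hab⟩)
      rw [if_neg]
      rintro ⟨hik, -⟩
      omega
    · have hjb : j ≤ upsCount n s (t + 1) := by
        rcases le_or_gt m (t + 1) with hcmp | hcmp
        · exact le_trans hOB (upsCount_mono n s hcmp)
        · have hmono := downsCount_mono n s (le_of_lt hcmp)
          omega
      apply Finset.prod_eq_zero (Finset.mem_Icc.mpr ⟨hab, le_refl b⟩)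
      rw [if_neg]
      rintro ⟨-, hkj⟩
      omega
end

section
/- Let G be a family of subsets of {0,...,n} such that every G ∈ G is an interval, every pair [i-1,i] for 1 ≤ i ≤ n is in G, and every G ∈ G has |G| > 1. For F ⊆ {0,...,n}, the face of the Minkowski sum P_G = Σ_{G∈G} Δ_G minimizing the linear form Σ_{i∈F} x_i equals Σ_{G⊆F} Δ_G + Σ_{G\F≠∅} Δ_{G\F}. -/
open Pointwise

/-- The standard simplex `Δ_G ⊂ ℝ^{n+1}` on the coordinate subset `G ⊆ {0,…,n}`. -/
def simplexOn (n : ℕ) (G : Finset (Fin (n + 1))) : Set (Fin (n + 1) → ℝ) :=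
  {x | (∀ i, 0 ≤ x i) ∧ (∀ i, i ∉ G → x i = 0) ∧ ∑ i, x i = 1}

/-- for a family 𝒢 of intervals in `{0,…,n}` of size `> 1`
containing all pairs `[i-1,i]`, the face of the Minkowski sum `P_𝒢 = Σ_G Δ_G`
minimizing the linear form `Σ_{i∈F} x_i` is
`Σ_{G ⊆ F} Δ_G + Σ_{G\F ≠ ∅} Δ_{G\F}`. -/
theorem face_of_minkowski_sum (n : ℕ) (𝒢 : Finset (Finset (Fin (n + 1))))
    (hInt : ∀ G ∈ 𝒢, ∀ x ∈ G, ∀ y ∈ G, ∀ z, x ≤ z → z ≤ y → z ∈ G)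
    (hPairs : ∀ i : Fin n, ({i.castSucc, i.succ} : Finset (Fin (n + 1))) ∈ 𝒢)
    (hCard : ∀ G ∈ 𝒢, 1 < G.card)
    (F : Finset (Fin (n + 1))) :
    {x ∈ ∑ G ∈ 𝒢, simplexOn n G |
        ∀ y ∈ ∑ G ∈ 𝒢, simplexOn n G, ∑ i ∈ F, x i ≤ ∑ i ∈ F, y i}
      = (∑ G ∈ 𝒢.filter (fun G => G ⊆ F), simplexOn n G)
        + ∑ G ∈ 𝒢.filter (fun G => (G \ F).Nonempty), simplexOn n (G \ F) := by
  classical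
  set m : Finset (Fin (n + 1)) → ℝ := fun G => if G ⊆ F then 1 else 0 with hm
  set φ : Finset (Fin (n + 1)) → Set (Fin (n + 1) → ℝ) :=
    fun G => simplexOn n (if G ⊆ F then G else G \ F) with hφ
  -- lower bound for the linear form on each simplex
  have lb : ∀ G, ∀ x ∈ simplexOn n G, m G ≤ ∑ i ∈ F, x i := by
    intro G x hx
    obtain ⟨h0, hz, hs⟩ := hx
    by_cases hGF : G ⊆ F
    · simp only [hm, if_pos hGF]
      have : ∑ i ∈ F, x i = ∑ i, x i :=
        Finset.sum_subset (Finset.subset_univ F)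
          (fun i _ hiF => hz i (fun hiG => hiF (hGF hiG)))
      rw [this, hs]
    · simp only [hm, if_neg hGF]
      exact Finset.sum_nonneg fun i _ => h0 i
  -- the faces are contained in the simplices
  have sub : ∀ G, φ G ⊆ simplexOn n G := by
    intro G x hx
    by_cases hGF : G ⊆ F
    · simpa only [hφ, if_pos hGF] using hx
    · simp only [hφ, if_neg hGF] at hx
      obtain ⟨h0, hz, hs⟩ := hx
      exact ⟨h0, fun i hi => hz i (fun h => hi (Finset.mem_sdiff.1 h).1), hs⟩
  -- the linear form is constant `m G` on the face
  have val : ∀ G, ∀ x ∈ φ G, ∑ i ∈ F, x i = m G := by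
    intro G x hx
    by_cases hGF : G ⊆ F
    · simp only [hφ, if_pos hGF] at hx
      obtain ⟨h0, hz, hs⟩ := hx
      simp only [hm, if_pos hGF]
      rw [Finset.sum_subset (Finset.subset_univ F)
        (fun i _ hiF => hz i (fun hiG => hiF (hGF hiG)))]
      exact hs
    · simp only [hφ, if_neg hGF] at hx
      obtain ⟨h0, hz, hs⟩ := hx
      simp only [hm, if_neg hGF]
      exact Finset.sum_eq_zero fun i hi => hz i (fun h => (Finset.mem_sdiff.1 h).2 hi)
  -- points of the simplex where the form attains `m G` lie in the face
  have char : ∀ G, ∀ x ∈ simplexOn n G, ∑ i ∈ F, x i = m G → x ∈ φ G := by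
    intro G x hx hval
    obtain ⟨h0, hz, hs⟩ := hx
    by_cases hGF : G ⊆ F
    · simp only [hφ, if_pos hGF]
      exact ⟨h0, hz, hs⟩
    · simp only [hm, if_neg hGF] at hval
      have hF0 : ∀ i ∈ F, x i = 0 :=
        (Finset.sum_eq_zero_iff_of_nonneg (fun i _ => h0 i)).1 hval
      simp only [hφ, if_neg hGF]
      refine ⟨h0, fun i hi => ?_, hs⟩
      by_cases hiF : i ∈ F
      · exact hF0 i hiF
      · exact hz i (fun hiG => hi (Finset.mem_sdiff.2 ⟨hiG, hiF⟩))
  -- faces are nonempty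
  have nonemp : ∀ G, ∃ v, G ∈ 𝒢 → v ∈ φ G := by
    intro G
    by_cases hG : G ∈ 𝒢
    · have hS : (if G ⊆ F then G else G \ F).Nonempty := by
        by_cases hGF : G ⊆ F
        · rw [if_pos hGF]
          exact Finset.card_pos.1 (lt_trans one_pos (hCard G hG))
        · rw [if_neg hGF]
          exact Finset.sdiff_nonempty.2 hGF
      obtain ⟨j, hj⟩ := hS
      refine ⟨fun i => if i = j then 1 else 0, fun _ => ?_⟩
      refine ⟨fun i => by positivity, fun i hi => ?_, by simp⟩
      show (if i = j then (1:ℝ) else 0) = 0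
      exact if_neg (fun h => hi (by rw [h]; exact hj))
    · exact ⟨0, fun h => absurd h hG⟩
  choose w hw using nonemp
  -- swapping sums
  have swap : ∀ f : Finset (Fin (n + 1)) → (Fin (n + 1) → ℝ),
      ∑ i ∈ F, (∑ G ∈ 𝒢, f G) i = ∑ G ∈ 𝒢, ∑ i ∈ F, f G i := by
    intro f
    simp only [Finset.sum_apply]
    exact Finset.sum_comm
  -- the RHS is the sum of the faces
  have hRHS : (∑ G ∈ 𝒢.filter (fun G => G ⊆ F), simplexOn n G)
        + ∑ G ∈ 𝒢.filter (fun G => (G \ F).Nonempty), simplexOn n (G \ F)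
      = ∑ G ∈ 𝒢, φ G := by
    rw [← Finset.sum_filter_add_sum_filter_not 𝒢 (fun G => G ⊆ F) φ]
    congr 1
    · refine Finset.sum_congr rfl fun G hG => ?_
      simp only [hφ, if_pos (Finset.mem_filter.1 hG).2]
    · have hfil : 𝒢.filter (fun G => (G \ F).Nonempty)
          = 𝒢.filter (fun G => ¬ G ⊆ F) := by
        apply Finset.filter_congr
        intro G _
        simp [Finset.sdiff_nonempty]
      rw [hfil]
      refine Finset.sum_congr rfl fun G hG => ?_
      simp only [hφ, if_neg (Finset.mem_filter.1 hG).2]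
  rw [hRHS]
  ext x
  constructor
  · rintro ⟨hxP, hmin⟩
    obtain ⟨f, hf, hfx⟩ := (Set.mem_finset_sum 𝒢 _ x).1 hxP
    -- the comparison point built from the faces
    have hyP : (∑ G ∈ 𝒢, w G) ∈ ∑ G ∈ 𝒢, simplexOn n G :=
      Set.finset_sum_mem_finset_sum 𝒢 _ _ (fun G hG => sub G (hw G hG))
    have h3 : ∑ i ∈ F, x i ≤ ∑ G ∈ 𝒢, m G := by
      calc ∑ i ∈ F, x i ≤ ∑ i ∈ F, (∑ G ∈ 𝒢, w G) i := hmin _ hyP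
        _ = ∑ G ∈ 𝒢, ∑ i ∈ F, w G i := swap w
        _ = ∑ G ∈ 𝒢, m G := Finset.sum_congr rfl fun G hG => val G _ (hw G hG)
    have h2 : ∑ i ∈ F, x i = ∑ G ∈ 𝒢, ∑ i ∈ F, f G i := by
      rw [← hfx]; exact swap f
    have h1 : ∀ G ∈ 𝒢, m G ≤ ∑ i ∈ F, f G i := fun G hG => lb G _ (hf hG)
    have heq : ∀ G ∈ 𝒢, m G = ∑ i ∈ F, f G i := by
      rw [← Finset.sum_eq_sum_iff_of_le h1]
      exact le_antisymm (Finset.sum_le_sum h1) (by rw [← h2]; exact h3)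
    refine (Set.mem_finset_sum 𝒢 φ x).2 ⟨f, fun {G} hG => ?_, hfx⟩
    exact char G _ (hf hG) (heq G hG).symm
  · intro hx
    obtain ⟨f, hf, hfx⟩ := (Set.mem_finset_sum 𝒢 φ x).1 hx
    have hxP : x ∈ ∑ G ∈ 𝒢, simplexOn n G := by
      rw [← hfx]
      exact Set.finset_sum_mem_finset_sum 𝒢 _ _ (fun G hG => sub G (hf hG))
    refine ⟨hxP, fun y hy => ?_⟩
    obtain ⟨g, hg, hgy⟩ := (Set.mem_finset_sum 𝒢 _ y).1 hy
    have hxval : ∑ i ∈ F, x i = ∑ G ∈ 𝒢, m G := by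
      rw [← hfx, swap f]
      exact Finset.sum_congr rfl fun G hG => val G _ (hf hG)
    rw [hxval, ← hgy, swap g]
    exact Finset.sum_le_sum fun G hG => lb G _ (hg hG)
end

section
/- Two facets of P_G, labeled by intervals F, F' ∈ F, have nonempty intersection if and only if F and F' are G-compatible, i.e., every G ∈ G with G ⊆ F ∪ F' satisfies G ⊆ F or G ⊆ F'. -/
open Pointwise

/-- The intervals labelling the facets of `P_𝒢` (Proposition 5.2): initial
intervals `[0,b]` with `b < n`, final intervals `[a,n]` with `a > 0`, and the
intervals `[a,b]` on or below the lowered Dyck path, i.e. such that some `G ∈ 𝒢`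
contains both `a-1` and `b+1`. -/
def IsFacetLabel (n : ℕ) (𝒢 : Finset (Finset (Fin (n + 1))))
    (F : Finset (Fin (n + 1))) : Prop :=
  ∃ a b : Fin (n + 1), a ≤ b ∧ F = Finset.Icc a b ∧
    (((a : ℕ) = 0 ∧ (b : ℕ) < n) ∨
     (0 < (a : ℕ) ∧ (b : ℕ) = n) ∨
     (0 < (a : ℕ) ∧ (b : ℕ) < n ∧
       ∃ G ∈ 𝒢, ∃ p q : Fin (n + 1),
         (p : ℕ) + 1 = (a : ℕ) ∧ (q : ℕ) = (b : ℕ) + 1 ∧ p ∈ G ∧ q ∈ G))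

/-- The facet of `P_𝒢` labelled by `F`: the face where `Σ_{i∈F} x_i` attains its
minimum over `P_𝒢`. -/
def facetOf (n : ℕ) (𝒢 : Finset (Finset (Fin (n + 1))))
    (F : Finset (Fin (n + 1))) : Set (Fin (n + 1) → ℝ) :=
  {x ∈ ∑ G ∈ 𝒢, simplexOn n G |
    ∀ y ∈ ∑ G ∈ 𝒢, simplexOn n G, ∑ i ∈ F, x i ≤ ∑ i ∈ F, y i}


lemma delta_mem (n : ℕ) (G : Finset (Fin (n+1))) (j : Fin (n+1)) (hj : j ∈ G) :
    (fun i => if i = j then (1:ℝ) else 0) ∈ simplexOn n G := by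
  refine ⟨fun i => by positivity, fun i hi => ?_, by simp⟩
  exact if_neg (fun h => hi (by rw [h]; exact hj))

lemma lower (n : ℕ) (F : Finset (Fin (n+1)))
    (G : Finset (Fin (n+1))) (fG : Fin (n+1) → ℝ) (hfG : fG ∈ simplexOn n G) :
    (if G ⊆ F then (1:ℝ) else 0) ≤ ∑ i ∈ F, fG i := by
  obtain ⟨hpos, hsupp, hsum⟩ := hfG
  split_ifs with h
  · calc (1:ℝ) = ∑ i, fG i := hsum.symm
    _ = ∑ i ∈ G, fG i := (Finset.sum_subset (Finset.subset_univ G)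
        (fun i _ hi => hsupp i hi)).symm
    _ ≤ ∑ i ∈ F, fG i := Finset.sum_le_sum_of_subset_of_nonneg h (fun i _ _ => hpos i)
  · exact Finset.sum_nonneg (fun i _ => hpos i)

lemma min_le (n : ℕ) (𝒢 : Finset (Finset (Fin (n+1)))) (F : Finset (Fin (n+1)))
    (y : Fin (n+1) → ℝ) (hy : y ∈ ∑ G ∈ 𝒢, simplexOn n G) :
    ∑ G ∈ 𝒢, (if G ⊆ F then (1:ℝ) else 0) ≤ ∑ i ∈ F, y i := by
  obtain ⟨f, hf, hfy⟩ := (Set.mem_finset_sum 𝒢 _ y).mp hy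
  have : ∑ i ∈ F, y i = ∑ G ∈ 𝒢, ∑ i ∈ F, f G i := by
    rw [← hfy]
    rw [Finset.sum_congr rfl (fun i (_ : i ∈ F) => Finset.sum_apply i 𝒢 f)]
    exact Finset.sum_comm
  rw [this]
  exact Finset.sum_le_sum (fun G hG => lower n F G (f G) (hf hG))

/-- Sum over `F` of the point determined by a choice function `g`. -/
lemma pt_sumF (n : ℕ) (𝒢 : Finset (Finset (Fin (n+1)))) (F : Finset (Fin (n+1)))
    (g : Finset (Fin (n+1)) → Fin (n+1)) :
    ∑ i ∈ F, (∑ G ∈ 𝒢, fun i => if i = g G then (1:ℝ) else 0) i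
      = ∑ G ∈ 𝒢, (if g G ∈ F then (1:ℝ) else 0) := by
  have : ∀ i ∈ F, (∑ G ∈ 𝒢, fun i => if i = g G then (1:ℝ) else 0) i
      = ∑ G ∈ 𝒢, (if i = g G then (1:ℝ) else 0) :=
    fun i _ => Finset.sum_apply i 𝒢 _
  rw [Finset.sum_congr rfl this, Finset.sum_comm]
  exact Finset.sum_congr rfl (fun G _ => by simp [Finset.sum_ite_eq', eq_comm])

lemma pt_mem_P (n : ℕ) (𝒢 : Finset (Finset (Fin (n+1))))
    (g : Finset (Fin (n+1)) → Fin (n+1)) (hg : ∀ G ∈ 𝒢, g G ∈ G) :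
    (∑ G ∈ 𝒢, fun i => if i = g G then (1:ℝ) else 0) ∈ ∑ G ∈ 𝒢, simplexOn n G :=
  (Set.mem_finset_sum 𝒢 _ _).mpr
    ⟨fun G => fun i => if i = g G then (1:ℝ) else 0,
     fun {G} hG => delta_mem n G (g G) (hg G hG), rfl⟩

lemma pt_sumF_eq (n : ℕ) (𝒢 : Finset (Finset (Fin (n+1)))) (F : Finset (Fin (n+1)))
    (g : Finset (Fin (n+1)) → Fin (n+1))
    (hgF : ∀ G ∈ 𝒢, (g G ∈ F ↔ G ⊆ F)) :
    ∑ i ∈ F, (∑ G ∈ 𝒢, fun i => if i = g G then (1:ℝ) else 0) i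
      = ∑ G ∈ 𝒢, (if G ⊆ F then (1:ℝ) else 0) := by
  rw [pt_sumF]
  exact Finset.sum_congr rfl (fun G hG => by
    by_cases h : G ⊆ F
    · rw [if_pos ((hgF G hG).mpr h), if_pos h]
    · rw [if_neg (fun hf => h ((hgF G hG).mp hf)), if_neg h])

lemma sum_decomp (n : ℕ) (𝒢 : Finset (Finset (Fin (n+1)))) (F : Finset (Fin (n+1)))
    (f : Finset (Fin (n+1)) → Fin (n+1) → ℝ) :
    ∑ i ∈ F, (∑ G ∈ 𝒢, f G) i = ∑ G ∈ 𝒢, ∑ i ∈ F, f G i := by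
  rw [Finset.sum_congr rfl (fun i (_ : i ∈ F) => Finset.sum_apply i 𝒢 f)]
  exact Finset.sum_comm

lemma pt_mem_facet (n : ℕ) (𝒢 : Finset (Finset (Fin (n+1)))) (F : Finset (Fin (n+1)))
    (g : Finset (Fin (n+1)) → Fin (n+1)) (hg : ∀ G ∈ 𝒢, g G ∈ G)
    (hgF : ∀ G ∈ 𝒢, (g G ∈ F ↔ G ⊆ F)) :
    (∑ G ∈ 𝒢, fun i => if i = g G then (1:ℝ) else 0) ∈ facetOf n 𝒢 F := by
  refine ⟨pt_mem_P n 𝒢 g hg, fun y hy => ?_⟩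
  rw [pt_sumF_eq n 𝒢 F g hgF]
  exact min_le n 𝒢 F y hy

/-- Existence of a suitable choice function avoiding `F` and `F'` when possible. -/
lemma choice_fn (n : ℕ) (𝒢 : Finset (Finset (Fin (n+1)))) (F F' : Finset (Fin (n+1)))
    (hCard : ∀ G ∈ 𝒢, 1 < G.card)
    (hcompat : ∀ G ∈ 𝒢, G ⊆ F ∪ F' → G ⊆ F ∨ G ⊆ F') :
    ∃ g : Finset (Fin (n+1)) → Fin (n+1), ∀ G ∈ 𝒢,
      g G ∈ G ∧ (g G ∈ F ↔ G ⊆ F) ∧ (g G ∈ F' ↔ G ⊆ F') := by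
  have h : ∀ G : Finset (Fin (n+1)), ∃ j : Fin (n+1), G ∈ 𝒢 →
      j ∈ G ∧ (j ∈ F ↔ G ⊆ F) ∧ (j ∈ F' ↔ G ⊆ F') := by
    intro G
    by_cases hG : G ∈ 𝒢
    · have hne : G.Nonempty := Finset.card_pos.mp (by have := hCard G hG; omega)
      by_cases hF : G ⊆ F
      · by_cases hF' : G ⊆ F'
        · obtain ⟨j, hj⟩ := hne
          exact ⟨j, fun _ => ⟨hj, by simp [hF hj, hF' hj, hF, hF']⟩⟩
        · obtain ⟨j, hj, hj'⟩ := Finset.not_subset.mp hF'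
          exact ⟨j, fun _ => ⟨hj, by simp [hF hj, hF, hF', hj']⟩⟩
      · by_cases hF' : G ⊆ F'
        · obtain ⟨j, hj, hj'⟩ := Finset.not_subset.mp hF
          exact ⟨j, fun _ => ⟨hj, by simp [hF' hj, hF, hF', hj']⟩⟩
        · have : ¬ G ⊆ F ∪ F' := fun h => by rcases hcompat G hG h with h | h <;> tauto
          obtain ⟨j, hj, hj'⟩ := Finset.not_subset.mp this
          rw [Finset.mem_union] at hj'
          push_neg at hj'
          exact ⟨j, fun _ => ⟨hj, by simp [hF, hF', hj'.1, hj'.2]⟩⟩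
    · exact ⟨0, fun h => absurd h hG⟩
  choose g hg using h
  exact ⟨g, fun G hG => hg G hG⟩

/-- two facets of `P_𝒢`, labelled by intervals `F, F'`, intersect
iff `F` and `F'` are 𝒢-compatible: every `G ∈ 𝒢` with `G ⊆ F ∪ F'` satisfies
`G ⊆ F` or `G ⊆ F'`. -/
theorem facets_intersect_iff_compatible (n : ℕ) (𝒢 : Finset (Finset (Fin (n + 1))))
    (hInt : ∀ G ∈ 𝒢, ∀ x ∈ G, ∀ y ∈ G, ∀ z, x ≤ z → z ≤ y → z ∈ G)
    (hPairs : ∀ i : Fin n, ({i.castSucc, i.succ} : Finset (Fin (n + 1))) ∈ 𝒢)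
    (hCard : ∀ G ∈ 𝒢, 1 < G.card)
    (hUp : ∀ G H : Finset (Fin (n + 1)),
      (∀ x ∈ G, ∀ y ∈ G, ∀ z, x ≤ z → z ≤ y → z ∈ G) → 1 < G.card → G ∉ 𝒢 →
      G ⊆ H → H ∉ 𝒢)
    (F F' : Finset (Fin (n + 1)))
    (hF : IsFacetLabel n 𝒢 F) (hF' : IsFacetLabel n 𝒢 F') :
    (facetOf n 𝒢 F ∩ facetOf n 𝒢 F').Nonempty ↔
      ∀ G ∈ 𝒢, G ⊆ F ∪ F' → G ⊆ F ∨ G ⊆ F' := by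
  constructor
  · rintro ⟨x, ⟨hxP, hxF⟩, ⟨-, hxF'⟩⟩
    obtain ⟨f, hf, hfx⟩ := (Set.mem_finset_sum 𝒢 _ x).mp hxP
    have key : ∀ (K : Finset (Fin (n+1))),
        (∀ y ∈ ∑ G ∈ 𝒢, simplexOn n G, ∑ i ∈ K, x i ≤ ∑ i ∈ K, y i) →
        ∀ G ∈ 𝒢, ¬ G ⊆ K → ∀ i ∈ K, f G i = 0 := by
      intro K hmin
      obtain ⟨g, hg⟩ := choice_fn n 𝒢 K K hCard (fun G _ h => Or.inl (by simpa using h))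
      have hx_le : ∑ i ∈ K, x i ≤ ∑ G ∈ 𝒢, (if G ⊆ K then (1:ℝ) else 0) :=
        (hmin _ (pt_mem_P n 𝒢 g (fun G hG => (hg G hG).1))).trans_eq
          (pt_sumF_eq n 𝒢 K g (fun G hG => (hg G hG).2.1))
      have hx_eq : ∑ i ∈ K, x i = ∑ G ∈ 𝒢, ∑ i ∈ K, f G i := by
        rw [← hfx]; exact sum_decomp n 𝒢 K f
      have hterm : ∀ G ∈ 𝒢, (if G ⊆ K then (1:ℝ) else 0) ≤ ∑ i ∈ K, f G i :=
        fun G hG => lower n K G (f G) (hf hG)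
      have hsum0 : ∑ G ∈ 𝒢, (∑ i ∈ K, f G i - (if G ⊆ K then (1:ℝ) else 0)) = 0 := by
        rw [Finset.sum_sub_distrib]
        have h1 : ∑ G ∈ 𝒢, ∑ i ∈ K, f G i ≤ ∑ G ∈ 𝒢, (if G ⊆ K then (1:ℝ) else 0) := by
          rw [← hx_eq]; exact hx_le
        have h2 : ∑ G ∈ 𝒢, (if G ⊆ K then (1:ℝ) else 0) ≤ ∑ G ∈ 𝒢, ∑ i ∈ K, f G i :=
          Finset.sum_le_sum hterm
        linarith
      have heach := (Finset.sum_eq_zero_iff_of_nonneg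
        (fun G hG => sub_nonneg.mpr (hterm G hG))).mp hsum0
      intro G hG hnsub i hi
      have hz : ∑ i ∈ K, f G i = 0 := by
        have := heach G hG
        rw [if_neg hnsub] at this
        linarith
      exact (Finset.sum_eq_zero_iff_of_nonneg (fun i _ => (hf hG).1 i)).mp hz i hi
    have kF := key F hxF
    have kF' := key F' hxF'
    intro G hG hsub
    by_contra hc
    push_neg at hc
    have hz : ∑ i, f G i = 0 := Finset.sum_eq_zero (fun i _ => by
      by_cases hiG : i ∈ G
      · rcases Finset.mem_union.mp (hsub hiG) with h | h
        · exact kF G hG hc.1 i h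
        · exact kF' G hG hc.2 i h
      · exact (hf hG).2.1 i hiG)
    have h1 := (hf hG).2.2
    rw [hz] at h1
    exact one_ne_zero h1.symm
  · intro hcompat
    obtain ⟨g, hg⟩ := choice_fn n 𝒢 F F' hCard hcompat
    exact ⟨_, pt_mem_facet n 𝒢 F g (fun G hG => (hg G hG).1) (fun G hG => (hg G hG).2.1),
      pt_mem_facet n 𝒢 F' g (fun G hG => (hg G hG).1) (fun G hG => (hg G hG).2.2)⟩
end

section
/- If X ∈ I_A with the u-equation u_X + Π_{Y incompatible with X} u_Y = 1, and a point of U_A satisfies u_X = 0, then u_Y = 1 for every Y incompatible with X, provided the u-equations also hold for every such Y and the pattern of incompatibilities has the 'binary' property: in the ℂA_2 pentagon system, setting u_{12} = 0 forces u_1 = 1 and u_{Σ2} = 1. -/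
/-- on the pentagon configuration space, any solution with `u₁₂ = 0`
satisfies `u₁ = 1`, `u_{Σ2} = 1`, and `u₂ + uS1 = 1` (the boundary divisor
`u₁₂ = 0` is the configuration space of ℂA₁ × ℂA₁, a segment). -/
theorem pentagon_boundary_divisor (u1 u2 uS1 uS2 u12 : ℂ)
    (e1 : u12 + u1 * uS2 = 1)
    (e2 : u1 + u12 * uS1 = 1)
    (e3 : u2 + uS1 * uS2 = 1)
    (e4 : uS1 + u1 * u2 = 1)
    (e5 : uS2 + u2 * u12 = 1)
    (h : u12 = 0) :
    u1 = 1 ∧ uS2 = 1 ∧ u2 + uS1 = 1 := by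
  subst h
  have h1 : u1 = 1 := by linear_combination e2
  have h2 : uS2 = 1 := by linear_combination e5
  refine ⟨h1, h2, ?_⟩
  rw [h2] at e3; linear_combination e3
end
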